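/- arXiv:0704.0508 — 2 statements merged into one kernel-verified Lean document; each statement's English description precedes it below -/
import Mathlib

section
/- Let (Ω, F, P) be a probability space with a filtration F_1 ⊆ F_2 ⊆ … ⊆ F_M, and let Δ_1, …, Δ_M be nonnegative random variables with Δ_i measurable with respect to F_i. Suppose there are constants δ ≥ 0 and F ≥ 0 such that Δ_i ≤ δ almost surely for all i, and E[Σ_{j=i+1}^{M} Δ_j | F_i] ≤ F almost surely for every i. Then E[(Σ_{i=1}^M Δ_i)^2] ≤ (δ + 2F) · E[Σ_{i=1}^M Δ_i] ≤ (δ + 2F) · (δ + F). -/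
/-! Expand the square: $(\sum_i Δ_i)^2 = \sum_i Δ_i^2 + 2 \sum_i Δ_i T_i$ with $T_i = \sum_{j>i} Δ_j$.
Since $0 ≤ Δ_i ≤ δ$, $E[Δ_i^2] ≤ δ E[Δ_i]$; since $Δ_i$ is $F_i$-measurable and nonnegative, pulling it out
of $E[Δ_i T_i \mid F_i]$ gives $E[Δ_i T_i] = E[Δ_i E[T_i \mid F_i]] ≤ C E[Δ_i]$. The first moment is
$E[Δ_1] + E[T_1] ≤ δ + C$. -/

open MeasureTheory Finset

theorem sq_sum_Icc_one {R : Type*} [CommSemiring R] (a : ℕ → R) (M : ℕ) :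
    (∑ i ∈ Icc 1 M, a i) ^ 2
      = ∑ i ∈ Icc 1 M, a i ^ 2 + 2 * ∑ i ∈ Icc 1 M, a i * ∑ j ∈ Icc (i + 1) M, a j := by
  induction M with
  | zero => simp
  | succ M ih =>
    have htail : ∀ i ∈ Icc 1 M, a i * ∑ j ∈ Icc (i + 1) (M + 1), a j
        = a i * ∑ j ∈ Icc (i + 1) M, a j + a i * a (M + 1) := fun i hi => by
      rw [sum_Icc_succ_top (by grind), mul_add]
    have h1 : 1 ≤ M + 1 := by omega
    rw [sum_Icc_succ_top h1, sum_Icc_succ_top h1, sum_Icc_succ_top h1, sum_congr rfl htail,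
      sum_add_distrib, ← sum_mul, Icc_eq_empty_of_lt (Nat.lt_succ_self (M + 1)), sum_empty,
      mul_zero, add_zero, add_sq, ih]
    ring

section

variable {Ω : Type*} {m m0 : MeasurableSpace Ω} {μ : Measure Ω}

theorem ae_norm_le_of_nonneg_of_le {f : Ω → ℝ} {δ : ℝ} (hf_nonneg : 0 ≤ᵐ[μ] f)
    (hfδ : ∀ᵐ ω ∂μ, f ω ≤ δ) : ∀ᵐ ω ∂μ, ‖f ω‖ ≤ δ := by
  filter_upwards [hf_nonneg, hfδ] with ω h0 h1
  rwa [Real.norm_of_nonneg h0]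

theorem integral_sq_le_mul_integral [IsFiniteMeasure μ] {f : Ω → ℝ} {δ : ℝ}
    (hf : AEStronglyMeasurable f μ) (hf_nonneg : 0 ≤ᵐ[μ] f) (hfδ : ∀ᵐ ω ∂μ, f ω ≤ δ) :
    ∫ ω, f ω ^ 2 ∂μ ≤ δ * ∫ ω, f ω ∂μ := by
  have hbound := ae_norm_le_of_nonneg_of_le hf_nonneg hfδ
  have hint : Integrable f μ := .of_bound hf δ hbound
  rw [← integral_const_mul]
  refine integral_mono_ae ?_ (hint.const_mul δ) ?_
  · simpa only [sq] using hint.bdd_mul hf hbound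
  · filter_upwards [hf_nonneg, hfδ] with ω h0 h1
    rw [sq]
    exact mul_le_mul_of_nonneg_right h1 h0

theorem integral_le_of_condExp_le [IsProbabilityMeasure μ] (hm : m ≤ m0) {g : Ω → ℝ} {C : ℝ}
    (hgC : ∀ᵐ ω ∂μ, μ[g | m] ω ≤ C) :
    ∫ ω, g ω ∂μ ≤ C := by
  calc ∫ ω, g ω ∂μ = ∫ ω, μ[g | m] ω ∂μ := (integral_condExp hm).symm
    _ ≤ ∫ _, C ∂μ := integral_mono_ae integrable_condExp (integrable_const C) hgC
    _ = C := by simp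

theorem integral_mul_le_of_condExp_le [IsFiniteMeasure μ] (hm : m ≤ m0) {f g : Ω → ℝ} {C : ℝ}
    (hf : StronglyMeasurable[m] f) (hf_nonneg : 0 ≤ᵐ[μ] f) (hf_int : Integrable f μ)
    (hg : Integrable g μ) (hfg : Integrable (f * g) μ) (hgC : ∀ᵐ ω ∂μ, μ[g | m] ω ≤ C) :
    ∫ ω, f ω * g ω ∂μ ≤ C * ∫ ω, f ω ∂μ := by
  have hpull : μ[f * g | m] =ᵐ[μ] f * μ[g | m] :=
    condExp_mul_of_stronglyMeasurable_left hf hfg hg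
  calc ∫ ω, f ω * g ω ∂μ = ∫ ω, μ[f * g | m] ω ∂μ := (integral_condExp hm).symm
    _ = ∫ ω, f ω * μ[g | m] ω ∂μ := integral_congr_ae hpull
    _ ≤ ∫ ω, C * f ω ∂μ := by
      refine integral_mono_ae (integrable_condExp.congr hpull) (hf_int.const_mul C) ?_
      filter_upwards [hf_nonneg, hgC] with ω h0 h1
      rw [mul_comm C]
      exact mul_le_mul_of_nonneg_left h1 h0
    _ = C * ∫ ω, f ω ∂μ := integral_const_mul C _

end

theorem integral_sq_sum_Icc_le {Ω : Type*} {m0 : MeasurableSpace Ω} {P : Measure Ω}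
    [IsProbabilityMeasure P] {M : ℕ} {F : ℕ → MeasurableSpace Ω} {Δ : ℕ → Ω → ℝ} {δ C : ℝ}
    (hF_le : ∀ i, F i ≤ m0) (hΔ_nonneg : ∀ i ω, 0 ≤ Δ i ω)
    (hΔ_meas : ∀ i, StronglyMeasurable[F i] (Δ i)) (hΔ_bd : ∀ i, ∀ᵐ ω ∂P, Δ i ω ≤ δ)
    (hcond : ∀ i ∈ Icc 1 M,
      ∀ᵐ ω ∂P, (P[fun ω' => ∑ j ∈ Icc (i + 1) M, Δ j ω' | F i]) ω ≤ C) :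
    ∫ ω, (∑ i ∈ Icc 1 M, Δ i ω) ^ 2 ∂P ≤ (δ + 2 * C) * ∫ ω, ∑ i ∈ Icc 1 M, Δ i ω ∂P := by
  have hΔ_sm i : AEStronglyMeasurable (Δ i) P := ((hΔ_meas i).mono (hF_le i)).aestronglyMeasurable
  have hΔ_norm i : ∀ᵐ ω ∂P, ‖Δ i ω‖ ≤ δ :=
    ae_norm_le_of_nonneg_of_le (.of_forall (hΔ_nonneg i)) (hΔ_bd i)
  have hΔ_int i : Integrable (Δ i) P := .of_bound (hΔ_sm i) δ (hΔ_norm i)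
  have hsq_int i : Integrable (fun ω => Δ i ω ^ 2) P := by
    simpa only [sq] using (hΔ_int i).bdd_mul (hΔ_sm i) (hΔ_norm i)
  have htail_int i : Integrable (fun ω => ∑ j ∈ Icc (i + 1) M, Δ j ω) P :=
    integrable_finsetSum _ fun j _ => hΔ_int j
  have hcross_int i : Integrable (fun ω => Δ i ω * ∑ j ∈ Icc (i + 1) M, Δ j ω) P :=
    (htail_int i).bdd_mul (hΔ_sm i) (hΔ_norm i)
  calc ∫ ω, (∑ i ∈ Icc 1 M, Δ i ω) ^ 2 ∂P
      = ∑ i ∈ Icc 1 M, ∫ ω, Δ i ω ^ 2 ∂P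
        + 2 * ∑ i ∈ Icc 1 M, ∫ ω, Δ i ω * ∑ j ∈ Icc (i + 1) M, Δ j ω ∂P := by
        simp_rw [sq_sum_Icc_one]
        rw [integral_add (integrable_finsetSum _ fun i _ => hsq_int i)
            ((integrable_finsetSum _ fun i _ => hcross_int i).const_mul 2),
          integral_finsetSum _ fun i _ => hsq_int i, integral_const_mul,
          integral_finsetSum _ fun i _ => hcross_int i]
    _ ≤ ∑ i ∈ Icc 1 M, δ * ∫ ω, Δ i ω ∂P + 2 * ∑ i ∈ Icc 1 M, C * ∫ ω, Δ i ω ∂P := by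
        gcongr with i hi i hi
        · exact integral_sq_le_mul_integral (hΔ_sm i) (.of_forall (hΔ_nonneg i)) (hΔ_bd i)
        · exact integral_mul_le_of_condExp_le (hF_le i) (hΔ_meas i) (.of_forall (hΔ_nonneg i))
            (hΔ_int i) (htail_int i) (hcross_int i) (hcond i hi)
    _ = (δ + 2 * C) * ∫ ω, ∑ i ∈ Icc 1 M, Δ i ω ∂P := by
        rw [integral_finsetSum _ fun i _ => hΔ_int i, ← mul_sum, ← mul_sum]
        ring

theorem integral_sum_Icc_le {Ω : Type*} {m0 : MeasurableSpace Ω} {P : Measure Ω}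
    [IsProbabilityMeasure P] {M : ℕ} {F : ℕ → MeasurableSpace Ω} {Δ : ℕ → Ω → ℝ} {δ C : ℝ}
    (hF_le : ∀ i, F i ≤ m0) (hΔ_nonneg : ∀ i ω, 0 ≤ Δ i ω)
    (hΔ_meas : ∀ i, StronglyMeasurable[F i] (Δ i)) (hδ : 0 ≤ δ) (hC : 0 ≤ C)
    (hΔ_bd : ∀ i, ∀ᵐ ω ∂P, Δ i ω ≤ δ)
    (hcond : ∀ i ∈ Icc 1 M,
      ∀ᵐ ω ∂P, (P[fun ω' => ∑ j ∈ Icc (i + 1) M, Δ j ω' | F i]) ω ≤ C) :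
    ∫ ω, ∑ i ∈ Icc 1 M, Δ i ω ∂P ≤ δ + C := by
  obtain rfl | hM : M = 0 ∨ 1 ≤ M := by omega
  · simpa using add_nonneg hδ hC
  have hΔ_sm i : AEStronglyMeasurable (Δ i) P := ((hΔ_meas i).mono (hF_le i)).aestronglyMeasurable
  have hΔ_int i : Integrable (Δ i) P := .of_bound (hΔ_sm i) δ
    (ae_norm_le_of_nonneg_of_le (.of_forall (hΔ_nonneg i)) (hΔ_bd i))
  have hfirst : ∫ ω, Δ 1 ω ∂P ≤ δ := by
    simpa using integral_mono_ae (hΔ_int 1) (integrable_const δ) (hΔ_bd 1)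
  have hrest : ∫ ω, ∑ j ∈ Icc (1 + 1) M, Δ j ω ∂P ≤ C :=
    integral_le_of_condExp_le (hF_le 1) (hcond 1 (by simpa using hM))
  simp_rw [← add_sum_Ioc_eq_sum_Icc hM, ← Icc_add_one_left_eq_Ioc]
  rw [integral_add (hΔ_int 1) (integrable_finsetSum _ fun j _ => hΔ_int j)]
  linarith

theorem stmt_0_general {Ω : Type*} {m0 : MeasurableSpace Ω} (P : Measure Ω) [IsProbabilityMeasure P]
    (M : ℕ) (F : ℕ → MeasurableSpace Ω) (hF_le : ∀ i, F i ≤ m0)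
    (Δ : ℕ → Ω → ℝ) (hΔ_nonneg : ∀ i ω, 0 ≤ Δ i ω)
    (hΔ_meas : ∀ i, StronglyMeasurable[F i] (Δ i))
    (δ C : ℝ) (hδ : 0 ≤ δ) (hC : 0 ≤ C)
    (hΔ_bd : ∀ i, ∀ᵐ ω ∂P, Δ i ω ≤ δ)
    (hcond : ∀ i ∈ Finset.Icc 1 M,
      ∀ᵐ ω ∂P, (P[fun ω' => ∑ j ∈ Finset.Icc (i + 1) M, Δ j ω' | F i]) ω ≤ C) :
    (∫ ω, (∑ i ∈ Finset.Icc 1 M, Δ i ω) ^ 2 ∂P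
        ≤ (δ + 2 * C) * ∫ ω, ∑ i ∈ Finset.Icc 1 M, Δ i ω ∂P) ∧
    (δ + 2 * C) * (∫ ω, ∑ i ∈ Finset.Icc 1 M, Δ i ω ∂P) ≤ (δ + 2 * C) * (δ + C) :=
  ⟨integral_sq_sum_Icc_le hF_le hΔ_nonneg hΔ_meas hΔ_bd hcond,
    mul_le_mul_of_nonneg_left (integral_sum_Icc_le hF_le hΔ_nonneg hΔ_meas hδ hC hΔ_bd hcond)
      (by positivity)⟩

theorem stmt_0 {Ω : Type*} {m0 : MeasurableSpace Ω} (P : Measure Ω) [IsProbabilityMeasure P]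
    (M : ℕ) (F : ℕ → MeasurableSpace Ω) (hF_le : ∀ i, F i ≤ m0)
    (hF_mono : ∀ i j, i ≤ j → F i ≤ F j)
    (Δ : ℕ → Ω → ℝ) (hΔ_nonneg : ∀ i ω, 0 ≤ Δ i ω)
    (hΔ_meas : ∀ i, StronglyMeasurable[F i] (Δ i))
    (δ C : ℝ) (hδ : 0 ≤ δ) (hC : 0 ≤ C)
    (hΔ_bd : ∀ i, ∀ᵐ ω ∂P, Δ i ω ≤ δ)
    (hcond : ∀ i ∈ Finset.Icc 1 M,
      ∀ᵐ ω ∂P, (P[fun ω' => ∑ j ∈ Finset.Icc (i + 1) M, Δ j ω' | F i]) ω ≤ C) :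
    (∫ ω, (∑ i ∈ Finset.Icc 1 M, Δ i ω) ^ 2 ∂P
        ≤ (δ + 2 * C) * ∫ ω, ∑ i ∈ Finset.Icc 1 M, Δ i ω ∂P) ∧
    (δ + 2 * C) * (∫ ω, ∑ i ∈ Finset.Icc 1 M, Δ i ω ∂P) ≤ (δ + 2 * C) * (δ + C) :=
  stmt_0_general P M F hF_le Δ hΔ_nonneg hΔ_meas δ C hδ hC hΔ_bd hcond
end

section
/- Let T > 0, γ ∈ (0,1), C > 0, and let g : (0, T] × ℝ → ℝ satisfy: (i) sup_x |g(r, x)| ≤ C·r^{−γ} for all r ∈ (0, T]; (ii) for every r_0 > 0, g is uniformly continuous on [r_0, T] × ℝ. Then the Riemann sums (1/n)·Σ_{k=1}^{⌊nT⌋} g(k/n, x) converge to ∫_0^T g(r, x) dr uniformly in x ∈ ℝ as n → ∞. -/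
/-!
Cut `[0, T]` into the cells `[i/n, (i+1)/n]` and compare the integral over each cell with
`1/n` times the value at its right end. Fix a small `r₀ > 0`. A cell inside `(0, 2r₀]` has
defect at most twice the integral of the decreasing majorant `C r^(-γ)` over it, so all of
them together contribute at most `2 ∫₀^{2r₀} C r^(-γ) dr`, which is small since `γ < 1`.
On `[r₀, T]`, uniform continuity makes each defect `o(1/n)` uniformly in `x`. The leftover
piece `[⌊nT⌋/n, T]` has length `< 1/n` and a bounded integrand.
-/

open Filter Finset

open Set MeasureTheory Topology

noncomputable def rightRiemannError (f : ℝ → ℝ) (a b : ℝ) : ℝ :=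
  (∫ r in a..b, f r) - (b - a) * f b

section Cell

variable {f ρ : ℝ → ℝ} {a b η : ℝ}

theorem abs_rightRiemannError_le_of_abs_sub_le (hab : a ≤ b)
    (hf : IntervalIntegrable f volume a b) (hη : ∀ r ∈ Icc a b, |f r - f b| ≤ η) :
    |rightRiemannError f a b| ≤ η * (b - a) := by
  have hsub : rightRiemannError f a b = ∫ r in a..b, (f r - f b) := by
    rw [intervalIntegral.integral_sub hf intervalIntegrable_const,
      intervalIntegral.integral_const, smul_eq_mul, rightRiemannError]
  have hbound : ∀ r ∈ uIoc a b, ‖f r - f b‖ ≤ η := fun r hr =>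
    hη r (Ioc_subset_Icc_self (uIoc_of_le hab ▸ hr))
  simpa only [hsub, Real.norm_eq_abs, abs_of_nonneg (sub_nonneg.mpr hab)] using
    intervalIntegral.norm_integral_le_of_norm_le_const hbound

theorem abs_rightRiemannError_le_two_mul_integral (hab : a ≤ b)
    (hρ : IntervalIntegrable ρ volume a b) (hanti : AntitoneOn ρ (Ioc a b)) (hfρ : ∀ r ∈ Ioc a b, |f r| ≤ ρ r) :
    |rightRiemannError f a b| ≤ 2 * ∫ r in a..b, ρ r := by
  rcases hab.eq_or_lt with rfl | hlt
  · simp [rightRiemannError]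
  have hb : b ∈ Ioc a b := right_mem_Ioc.mpr hlt
  have hintegral : ‖∫ r in a..b, f r‖ ≤ ∫ r in a..b, ρ r :=
    intervalIntegral.norm_integral_le_of_norm_le hab (ae_of_all _ hfρ) hρ
  have hright : (b - a) * |f b| ≤ ∫ r in a..b, ρ r := calc
    (b - a) * |f b| ≤ ∫ _ in a..b, ρ b := by
      rw [intervalIntegral.integral_const, smul_eq_mul]
      exact mul_le_mul_of_nonneg_left (hfρ b hb) (sub_nonneg.mpr hab)
    _ ≤ ∫ r in a..b, ρ r := intervalIntegral.integral_mono_on_of_le_Ioo hab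
        intervalIntegrable_const hρ fun r hr => hanti (Ioo_subset_Ioc_self hr) hb hr.2.le
  have htriangle := abs_sub (∫ r in a..b, f r) ((b - a) * f b)
  rw [abs_mul, abs_of_nonneg (sub_nonneg.mpr hab)] at htriangle
  rw [Real.norm_eq_abs] at hintegral
  rw [rightRiemannError]
  linarith

end Cell

section Grid

variable {f : ℝ → ℝ} {T : ℝ} {n N : ℕ}

noncomputable def gridCellError (f : ℝ → ℝ) (n i : ℕ) : ℝ :=
  rightRiemannError f ((i : ℝ) / n) (((i + 1 : ℕ) : ℝ) / n)

theorem sum_Icc_eq_sum_range_succ (f : ℕ → ℝ) (N : ℕ) :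
    ∑ k ∈ Icc 1 N, f k = ∑ i ∈ range N, f (i + 1) := by
  rw [range_eq_Ico, sum_Ico_add', ← Finset.Ico_add_one_right_eq_Icc, zero_add]

theorem natCast_div_mem_uIcc_zero {i : ℕ} (hN : (N : ℝ) / n ≤ T) (hi : i ≤ N) :
    (i : ℝ) / n ∈ uIcc 0 T := by
  rw [uIcc_of_le ((div_nonneg N.cast_nonneg n.cast_nonneg).trans hN)]
  refine ⟨by positivity, le_trans ?_ hN⟩
  gcongr

theorem natFloor_mul_div_mem_Ioc (hn : 0 < n) (hT : 0 ≤ T) :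
    (⌊(n : ℝ) * T⌋₊ : ℝ) / n ∈ Ioc (T - (n : ℝ)⁻¹) T := by
  have hn' : (0 : ℝ) < n := Nat.cast_pos.mpr hn
  rw [Set.mem_Ioc, lt_div_iff₀ hn', div_le_iff₀ hn', sub_mul, inv_mul_cancel₀ hn'.ne', mul_comm T]
  exact ⟨by linarith [Nat.lt_floor_add_one ((n : ℝ) * T)], Nat.floor_le (by positivity)⟩

theorem natCeil_mul_div_mem_Ico {r : ℝ} (hn : 0 < n) (hr : 0 ≤ r) :
    (⌈(n : ℝ) * r⌉₊ : ℝ) / n ∈ Ico r (r + (n : ℝ)⁻¹) := by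
  have hn' : (0 : ℝ) < n := Nat.cast_pos.mpr hn
  rw [Set.mem_Ico, le_div_iff₀ hn', div_lt_iff₀ hn', add_mul, inv_mul_cancel₀ hn'.ne', mul_comm r]
  exact ⟨Nat.le_ceil _, Nat.ceil_lt_add_one (by positivity)⟩

theorem integral_sub_riemannSum_eq (hf : IntervalIntegrable f volume 0 T)
    (hN : (N : ℝ) / n ≤ T) :
    (∫ r in (0 : ℝ)..T, f r) - 1 / (n : ℝ) * ∑ k ∈ Icc 1 N, f ((k : ℝ) / n) =
      ∑ i ∈ range N, gridCellError f n i + ∫ r in (N : ℝ) / n..T, f r := by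
  have hgrid : ∀ i ≤ N, (i : ℝ) / n ∈ uIcc 0 T := fun i hi => natCast_div_mem_uIcc_zero hN hi
  have hcells : ∑ i ∈ range N, ∫ r in (i : ℝ) / n..((i + 1 : ℕ) : ℝ) / n, f r =
      ∫ r in (0 : ℝ)..(N : ℝ) / n, f r := by
    simpa using intervalIntegral.sum_integral_adjacent_intervals (a := fun i : ℕ => (i : ℝ) / n)
      fun i hi => hf.mono_set (uIcc_subset_uIcc (hgrid i hi.le) (hgrid (i + 1) hi))
  have hwidth : ∀ i : ℕ, ((i + 1 : ℕ) : ℝ) / n - (i : ℝ) / n = 1 / n := fun i => by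
    push_cast; ring
  rw [← intervalIntegral.integral_add_adjacent_intervals
      (hf.mono_set (uIcc_subset_uIcc left_mem_uIcc (hgrid N le_rfl)))
      (hf.mono_set (uIcc_subset_uIcc (hgrid N le_rfl) right_mem_uIcc)),
    ← hcells, sum_Icc_eq_sum_range_succ, mul_sum]
  simp only [gridCellError, rightRiemannError, hwidth, sum_sub_distrib]
  ring

end Grid

section Estimates

variable {f ρ : ℝ → ℝ} {T r₀ η : ℝ} {n N K : ℕ}

theorem abs_integral_le_mul_of_antitoneOn (hr₀ : 0 < r₀) {a b : ℝ} (hr₀a : r₀ ≤ a) (hab : a ≤ b)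
    (hbT : b ≤ T) (hanti : AntitoneOn ρ (Ioc 0 T)) (hfρ : ∀ r ∈ Ioc 0 T, |f r| ≤ ρ r) :
    |∫ r in a..b, f r| ≤ ρ r₀ * (b - a) := by
  have hbound : ∀ r ∈ uIoc a b, ‖f r‖ ≤ ρ r₀ := fun r hr => by
    rw [uIoc_of_le hab] at hr
    have hr₀r : r₀ ≤ r := hr₀a.trans hr.1.le
    exact (hfρ r ⟨hr₀.trans_le hr₀r, hr.2.trans hbT⟩).trans
      (hanti ⟨hr₀, hr₀r.trans (hr.2.trans hbT)⟩ ⟨hr₀.trans_le hr₀r, hr.2.trans hbT⟩ hr₀r)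
  simpa only [Real.norm_eq_abs, abs_of_nonneg (sub_nonneg.mpr hab)] using
    intervalIntegral.norm_integral_le_of_norm_le_const hbound

theorem sum_abs_gridCellError_le_two_mul_integral (hρ : IntervalIntegrable ρ volume 0 T)
    (hanti : AntitoneOn ρ (Ioc 0 T)) (hfρ : ∀ r ∈ Ioc 0 T, |f r| ≤ ρ r) (hK : (K : ℝ) / n ≤ T) :
    ∑ i ∈ range K, |gridCellError f n i| ≤ 2 * ∫ r in (0 : ℝ)..(K : ℝ) / n, ρ r := by
  have hgrid : ∀ i ≤ K, (i : ℝ) / n ∈ uIcc 0 T := fun i hi => natCast_div_mem_uIcc_zero hK hi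
  have hcell : ∀ i < K, uIcc ((i : ℝ) / n) (((i + 1 : ℕ) : ℝ) / n) ⊆ uIcc 0 T := fun i hi =>
    uIcc_subset_uIcc (hgrid i hi.le) (hgrid (i + 1) hi)
  calc ∑ i ∈ range K, |gridCellError f n i|
      ≤ ∑ i ∈ range K, 2 * ∫ r in (i : ℝ) / n..((i + 1 : ℕ) : ℝ) / n, ρ r := by
        refine sum_le_sum fun i hi => ?_
        have hle : (i : ℝ) / n ≤ ((i + 1 : ℕ) : ℝ) / n := by gcongr; omega
        have hIoc : Ioc ((i : ℝ) / n) (((i + 1 : ℕ) : ℝ) / n) ⊆ Ioc 0 T := by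
          refine Ioc_subset_Ioc (by positivity) (le_trans ?_ hK)
          gcongr
          exact mem_range.mp hi
        exact abs_rightRiemannError_le_two_mul_integral hle
          (hρ.mono_set (hcell i (mem_range.mp hi))) (hanti.mono hIoc) fun r hr => hfρ r (hIoc hr)
    _ = 2 * ∫ r in (0 : ℝ)..(K : ℝ) / n, ρ r := by
        rw [← mul_sum]
        congr 1
        simpa using intervalIntegral.sum_integral_adjacent_intervals
          (a := fun i : ℕ => (i : ℝ) / n) fun i hi => hρ.mono_set (hcell i hi)

theorem sum_abs_gridCellError_le_mul (hf : IntervalIntegrable f volume 0 T)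
    (hN : (N : ℝ) / n ≤ T) (hK : r₀ ≤ (K : ℝ) / n) (hη0 : 0 ≤ η)
    (hη : ∀ r ∈ Icc r₀ T, ∀ s ∈ Icc r₀ T, |r - s| ≤ (n : ℝ)⁻¹ → |f r - f s| ≤ η) :
    ∑ i ∈ Ico K N, |gridCellError f n i| ≤ η * T := by
  have hwidth : ∀ i : ℕ, ((i + 1 : ℕ) : ℝ) / n - (i : ℝ) / n = (n : ℝ)⁻¹ := fun i => by
    push_cast; ring
  have hcell : ∀ i ∈ Finset.Ico K N, |gridCellError f n i| ≤ η * (n : ℝ)⁻¹ := by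
    intro i hi
    obtain ⟨hKi, hiN⟩ := Finset.mem_Ico.mp hi
    have hleft : r₀ ≤ (i : ℝ) / n := hK.trans (by gcongr)
    have hright : ((i + 1 : ℕ) : ℝ) / n ≤ T := le_trans (by gcongr; exact hiN) hN
    have hle : (i : ℝ) / n ≤ ((i + 1 : ℕ) : ℝ) / n := by gcongr; omega
    rw [← hwidth i]
    refine abs_rightRiemannError_le_of_abs_sub_le hle
      (hf.mono_set (uIcc_subset_uIcc (natCast_div_mem_uIcc_zero hN hiN.le)
        (natCast_div_mem_uIcc_zero hN hiN))) fun r hr => ?_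
    refine hη r ⟨hleft.trans hr.1, hr.2.trans hright⟩ _ ⟨hleft.trans hle, hright⟩ ?_
    rw [abs_sub_comm, abs_of_nonneg (sub_nonneg.mpr hr.2), ← hwidth i]
    linarith [hr.1]
  calc ∑ i ∈ Ico K N, |gridCellError f n i|
      ≤ ∑ i ∈ Ico K N, η * (n : ℝ)⁻¹ := sum_le_sum hcell
    _ ≤ ∑ i ∈ range N, η * (n : ℝ)⁻¹ := by
        refine sum_le_sum_of_subset_of_nonneg ?_ fun _ _ _ => by positivity
        rw [range_eq_Ico]
        exact Ico_subset_Ico_left (Nat.zero_le K)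
    _ = η * ((N : ℝ) / n) := by rw [sum_const, card_range, nsmul_eq_mul]; ring
    _ ≤ η * T := mul_le_mul_of_nonneg_left hN hη0

theorem abs_integral_sub_riemannSum_le (hn : 0 < n)
    (hr₀ : 0 < r₀) (hnr₀ : (n : ℝ)⁻¹ ≤ r₀) (hr₀T : 2 * r₀ ≤ T)
    (hf : IntervalIntegrable f volume 0 T) (hρ : IntervalIntegrable ρ volume 0 T)
    (hanti : AntitoneOn ρ (Ioc 0 T)) (hfρ : ∀ r ∈ Ioc 0 T, |f r| ≤ ρ r)
    (hη : ∀ r ∈ Icc r₀ T, ∀ s ∈ Icc r₀ T, |r - s| ≤ (n : ℝ)⁻¹ → |f r - f s| ≤ η) :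
    |(∫ r in (0 : ℝ)..T, f r) - 1 / (n : ℝ) * ∑ k ∈ Icc 1 ⌊(n : ℝ) * T⌋₊, f ((k : ℝ) / n)| ≤
      2 * (∫ r in (0 : ℝ)..2 * r₀, ρ r) + η * T + ρ r₀ / n := by
  have hn' : (0 : ℝ) < n := Nat.cast_pos.mpr hn
  obtain ⟨hTN, hNT⟩ := natFloor_mul_div_mem_Ioc hn (by linarith : 0 ≤ T)
  obtain ⟨hr₀K, hKr₀⟩ := natCeil_mul_div_mem_Ico hn hr₀.le
  set N := ⌊(n : ℝ) * T⌋₊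
  set K := ⌈(n : ℝ) * r₀⌉₊
  have hK2r₀ : (K : ℝ) / n ≤ 2 * r₀ := by linarith
  have hKN : K ≤ N := Nat.le_floor ((div_le_iff₀' hn').mp (hK2r₀.trans hr₀T))
  have hr₀N : r₀ ≤ (N : ℝ) / n := hr₀K.trans (by gcongr)
  have hη0 : 0 ≤ η := by
    simpa using hη r₀ ⟨le_rfl, by linarith⟩ r₀ ⟨le_rfl, by linarith⟩ (by simp [hn'.le])
  have hρr₀ : 0 ≤ ρ r₀ := (abs_nonneg _).trans (hfρ r₀ ⟨hr₀, by linarith⟩)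
  have h2r₀ : 2 * r₀ ∈ uIcc 0 T := by
    rw [Set.uIcc_of_le (by linarith)]; constructor <;> linarith
  have hsingular := sum_abs_gridCellError_le_two_mul_integral hρ hanti hfρ
    (hK2r₀.trans hr₀T)
  have hρmono : ∫ r in (0 : ℝ)..(K : ℝ) / n, ρ r ≤ ∫ r in (0 : ℝ)..2 * r₀, ρ r :=
    intervalIntegral.integral_mono_interval le_rfl (by positivity) hK2r₀
      ((ae_restrict_iff' measurableSet_Ioc).mpr (ae_of_all _ fun r hr =>
        (abs_nonneg _).trans (hfρ r ⟨hr.1, hr.2.trans hr₀T⟩)))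
      (hρ.mono_set (uIcc_subset_uIcc left_mem_uIcc h2r₀))
  have hregular := sum_abs_gridCellError_le_mul hf hNT hr₀K hη0 hη
  have htail := abs_integral_le_mul_of_antitoneOn hr₀ hr₀N hNT le_rfl hanti hfρ
  rw [integral_sub_riemannSum_eq hf hNT, ← sum_range_add_sum_Ico _ hKN]
  calc _ ≤ ∑ i ∈ range K, |gridCellError f n i| + ∑ i ∈ Finset.Ico K N, |gridCellError f n i| +
        |∫ r in (N : ℝ) / n..T, f r| :=
        (abs_add_le _ _).trans (add_le_add ((abs_add_le _ _).trans
          (add_le_add (abs_sum_le_sum_abs _ _) (abs_sum_le_sum_abs _ _))) le_rfl)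
    _ ≤ 2 * (∫ r in (0 : ℝ)..2 * r₀, ρ r) + η * T + ρ r₀ / n := by
        have : ρ r₀ * (T - (N : ℝ) / n) ≤ ρ r₀ * (n : ℝ)⁻¹ :=
          mul_le_mul_of_nonneg_left (by linarith) hρr₀
        rw [div_eq_mul_inv (ρ r₀)]
        linarith

end Estimates

theorem continuousOn_Ioc_of_forall_continuousOn_Icc {X : Type*} [TopologicalSpace X]
    {f : ℝ → X} {a b : ℝ} (h : ∀ c, a < c → ContinuousOn f (Icc c b)) :
    ContinuousOn f (Ioc a b) := fun r hr => by
  obtain ⟨c, hac, hcr⟩ := exists_between hr.1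
  exact ((h c hac).continuousWithinAt ⟨hcr.le, hr.2⟩).mono_of_mem_nhdsWithin
    (mem_nhdsWithin.mpr ⟨Ioi c, isOpen_Ioi, hcr, fun y hy => ⟨le_of_lt hy.1, hy.2.2⟩⟩)

theorem eventually_forall_abs_sub_le_of_uniformContinuousOn {α : Type*} [PseudoMetricSpace α]
    {g : ℝ → α → ℝ} {s : Set ℝ}
    (hg : UniformContinuousOn (fun q : ℝ × α => g q.1 q.2) (s ×ˢ univ)) {η : ℝ} (hη : 0 < η) :
    ∀ᶠ n : ℕ in atTop, ∀ x, ∀ r ∈ s, ∀ r' ∈ s, |r - r'| ≤ (n : ℝ)⁻¹ → |g r x - g r' x| ≤ η := by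
  obtain ⟨δ, hδ, hgδ⟩ := Metric.uniformContinuousOn_iff.mp hg η hη
  filter_upwards [(tendsto_inv_atTop_zero.comp tendsto_natCast_atTop_atTop).eventually
    (gt_mem_nhds hδ)] with n hn x r hr r' hr' hrr'
  have hdist : dist (r, x) (r', x) < δ := by
    simpa [Prod.dist_eq, Real.dist_eq] using hrr'.trans_lt hn
  simpa [Real.dist_eq] using (hgδ (r, x) ⟨hr, trivial⟩ (r', x) ⟨hr', trivial⟩ hdist).le

theorem intervalIntegrable_of_continuousOn_of_abs_le {f ρ : ℝ → ℝ} {a b : ℝ} (hab : a ≤ b)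
    (hf : ContinuousOn f (Ioc a b)) (hρ : IntervalIntegrable ρ volume a b)
    (hfρ : ∀ r ∈ Ioc a b, |f r| ≤ ρ r) : IntervalIntegrable f volume a b := by
  refine hρ.mono_fun' ?_ ?_ <;> rw [uIoc_of_le hab]
  · exact hf.aestronglyMeasurable measurableSet_Ioc
  · exact (ae_restrict_iff' measurableSet_Ioc).mpr (ae_of_all _ hfρ)

theorem exists_pos_two_mul_le_and_integral_lt {ρ : ℝ → ℝ}
    (hρ : ∀ a b, IntervalIntegrable ρ volume a b) {T ε : ℝ} (hT : 0 < T) (hε : 0 < ε) :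
    ∃ r₀, 0 < r₀ ∧ 2 * r₀ ≤ T ∧ 2 * (∫ r in (0 : ℝ)..2 * r₀, ρ r) < ε := by
  have hsmall : ∀ᶠ t in 𝓝 (0 : ℝ), 2 * (∫ r in (0 : ℝ)..2 * t, ρ r) < ε ∧ 2 * t ≤ T := by
    refine (((intervalIntegral.continuous_primitive hρ 0).comp (continuous_const_mul 2)).const_mul 2
      |>.tendsto' 0 0 (by simp) |>.eventually (gt_mem_nhds hε)).and ?_
    exact (continuous_const_mul 2).tendsto' 0 0 (by simp) |>.eventually (ge_mem_nhds hT)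
  obtain ⟨r₀, ⟨hintegral, hr₀T⟩, hr₀⟩ :=
    ((hsmall.filter_mono nhdsWithin_le_nhds).and (self_mem_nhdsWithin (s := Ioi 0))).exists
  exact ⟨r₀, hr₀, hr₀T, hintegral⟩

theorem stmt_13 (T γ C : ℝ) (hT : 0 < T) (hγ0 : 0 < γ) (hγ1 : γ < 1) (hC : 0 < C)
    (g : ℝ → ℝ → ℝ)
    (hbd : ∀ r ∈ Set.Ioc (0 : ℝ) T, ∀ x : ℝ, |g r x| ≤ C * r ^ (-γ))
    (hcont : ∀ r₀ : ℝ, 0 < r₀ →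
      UniformContinuousOn (fun q : ℝ × ℝ => g q.1 q.2) (Set.Icc r₀ T ×ˢ Set.univ)) :
    TendstoUniformly
      (fun (n : ℕ) (x : ℝ) => (1 / (n : ℝ)) * ∑ k ∈ Finset.Icc 1 ⌊(n : ℝ) * T⌋₊, g ((k : ℝ) / n) x)
      (fun x => ∫ r in (0 : ℝ)..T, g r x) atTop := by
  set ρ : ℝ → ℝ := fun r => C * r ^ (-γ)
  have hρ : ∀ a b, IntervalIntegrable ρ volume a b := fun a b =>
    (intervalIntegral.intervalIntegrable_rpow' (by linarith)).const_mul C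
  have hanti : AntitoneOn ρ (Ioc 0 T) := fun r hr s _ hrs =>
    mul_le_mul_of_nonneg_left (Real.rpow_le_rpow_of_nonpos hr.1 hrs (by linarith)) hC.le
  have hgint (x : ℝ) : IntervalIntegrable (fun r => g r x) volume 0 T :=
    intervalIntegrable_of_continuousOn_of_abs_le hT.le
      (continuousOn_Ioc_of_forall_continuousOn_Icc fun c hc => (hcont c hc).continuousOn.comp
        (Continuous.prodMk_left x).continuousOn fun r hr => ⟨hr, trivial⟩)
      (hρ 0 T) fun r hr => hbd r hr x
  rw [Metric.tendstoUniformly_iff]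
  intro ε hε
  obtain ⟨r₀, hr₀, hr₀T, hρr₀⟩ :=
    exists_pos_two_mul_le_and_integral_lt hρ hT (by positivity : 0 < ε / 3)
  have hinv : Tendsto (fun n : ℕ => (n : ℝ)⁻¹) atTop (𝓝 0) :=
    tendsto_inv_atTop_zero.comp tendsto_natCast_atTop_atTop
  filter_upwards [eventually_forall_abs_sub_le_of_uniformContinuousOn (hcont r₀ hr₀)
      (by positivity : 0 < ε / (3 * T)), hinv.eventually (ge_mem_nhds hr₀),
    (tendsto_const_div_atTop_nhds_zero_nat (ρ r₀)).eventually
      (gt_mem_nhds (by positivity : (0 : ℝ) < ε / 3)),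
    eventually_gt_atTop 0] with n hη hnr₀ hρn hn x
  have hbound := abs_integral_sub_riemannSum_le hn hr₀ hnr₀ hr₀T (hgint x) (hρ 0 T) hanti
    (fun r hr => hbd r hr x) (hη x)
  have hηT : ε / (3 * T) * T = ε / 3 := by field_simp
  rw [dist_comm, Real.dist_eq, abs_sub_comm]
  linarith
end
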